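/- arXiv:2206.10102 — 2 statements merged into one kernel-verified Lean document; each statement's English description precedes it below -/
import Mathlib

section
/- Under the hypotheses n ≥ 3, c real with |c| ≤ 1, and c²/4 ≤ |a| ≤ (1-c/2)², if |z| ≤ |a|^{1/n}/2 (and z ≠ 0), then |R(z)| ≥ 2, where R(z) = z^n + a/z^n + c. -/
/-!
Write `w = zⁿ`. The radius bound gives `2ⁿ‖w‖ ≤ ‖a‖`, so the term `a / w` has norm at least
`2ⁿ ≥ 8`, while `‖a‖ ≤ (1 - c/2)² ≤ 9/4` keeps `‖w‖ ≤ 9/32`. Hence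
`‖w + a/w + c‖ ≥ 8 - 9/32 - 1 ≥ 2`.
-/

theorem two_pow_mul_norm_pow_le {𝕜 : Type*} [NormedDivisionRing 𝕜] {n : ℕ} (hn : n ≠ 0)
    {z : 𝕜} {A : ℝ} (hA : 0 ≤ A) (hz : ‖z‖ ≤ A ^ ((1 : ℝ) / n) / 2) : 2 ^ n * ‖z ^ n‖ ≤ A :=
  calc 2 ^ n * ‖z ^ n‖ = (2 * ‖z‖) ^ n := by rw [norm_pow, mul_pow]
    _ ≤ (A ^ ((n : ℝ)⁻¹)) ^ n := by
      rw [← one_div]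
      gcongr
      linarith
    _ = A := Real.rpow_inv_natCast_pow hA hn

theorem norm_div_sub_norm_sub_norm_le {𝕜 : Type*} [NormedField 𝕜] (w a c : 𝕜) :
    ‖a‖ / ‖w‖ - ‖w‖ - ‖c‖ ≤ ‖w + a / w + c‖ := by
  have h := norm_sub_norm_le (a / w) (-(w + c))
  rw [norm_neg, sub_neg_eq_add, norm_div] at h
  calc ‖a‖ / ‖w‖ - ‖w‖ - ‖c‖ ≤ ‖a‖ / ‖w‖ - ‖w + c‖ := by linarith [norm_add_le w c]
    _ ≤ ‖a / w + (w + c)‖ := h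
    _ = ‖w + a / w + c‖ := by ring_nf

theorem inner_escape_general (n : ℕ) (hn : 3 ≤ n) (c : ℝ) (hc : |c| ≤ 1)
    (a : ℂ) (ha2 : ‖a‖ ≤ (1 - c / 2) ^ 2) :
    ∀ z : ℂ, z ≠ 0 → ‖z‖ ≤ (‖a‖) ^ ((1 : ℝ) / n) / 2 →
      2 ≤ ‖z ^ n + a / z ^ n + (c : ℂ)‖ := by
  intro z hz hzr
  obtain ⟨hc₁, hc₂⟩ := abs_le.mp hc
  have ha : ‖a‖ ≤ 9 / 4 := by nlinarith
  have h8 : (8 : ℝ) ≤ 2 ^ n := by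
    calc (8 : ℝ) = 2 ^ 3 := by norm_num
      _ ≤ 2 ^ n := pow_le_pow_right₀ (by norm_num) hn
  have hw : 2 ^ n * ‖z ^ n‖ ≤ ‖a‖ := two_pow_mul_norm_pow_le (by omega) (norm_nonneg a) hzr
  have hw_pos : 0 < ‖z ^ n‖ := norm_pos_iff.mpr (pow_ne_zero n hz)
  have hw_small : ‖z ^ n‖ ≤ 9 / 32 := by nlinarith
  have hdiv : 8 ≤ ‖a‖ / ‖z ^ n‖ := by rw [le_div_iff₀ hw_pos]; nlinarith
  have hc_norm : ‖(c : ℂ)‖ ≤ 1 := by rwa [Complex.norm_real, Real.norm_eq_abs]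
  linarith [norm_div_sub_norm_sub_norm_le (z ^ n) a (c : ℂ)]

/-- Under the hypotheses `n ≥ 3`, `c` real with `|c| ≤ 1`, and `c²/4 ≤ |a| ≤ (1-c/2)²`,
if `|z| ≤ |a|^{1/n}/2` (and `z ≠ 0`), then `|R(z)| ≥ 2`, where `R(z) = z^n + a/z^n + c`. -/
theorem inner_escape (n : ℕ) (hn : 3 ≤ n) (c : ℝ) (hc : |c| ≤ 1)
    (a : ℂ) (ha : a ≠ 0) (ha1 : c ^ 2 / 4 ≤ ‖a‖)
    (ha2 : ‖a‖ ≤ (1 - c / 2) ^ 2) :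
    ∀ z : ℂ, z ≠ 0 → ‖z‖ ≤ (‖a‖) ^ ((1 : ℝ) / n) / 2 →
      2 ≤ ‖z ^ n + a / z ^ n + (c : ℂ)‖ :=
  inner_escape_general n hn c hc a ha2
end

section
/- For z = r·exp(i(ψ ± π)/(2n)) with |a|^{1/n}/2 < r < 2 and ψ = Arg(a), one has R(z) = ±i·e^{iψ/2}·(r^n - |a|/r^n) + c. In particular the image of these two boundary rays lies on the line through c in direction i·e^{iψ/2} (the minor axis of the image ellipse). -/
/-!
Write `E = exp(iψ/2)`, so that `a = |a| E²`. On the ray of argument `(ψ ± π)/(2n)` one has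
`zⁿ = rⁿ E u` with `u = exp(± iπ/2) = ± i`; since `u⁻¹ = -u`, the term `a/zⁿ = |a| E/(rⁿ u)` equals
`-u E |a|/rⁿ`, and the two terms of `R(z) - c` combine to `u E (rⁿ - |a|/rⁿ)`.
-/

open Complex

namespace Complex

lemma ofReal_mul_exp_div_two_mul_pow (n : ℕ) (hn : n ≠ 0) (r ψ s : ℝ) :
    ((r : ℂ) * exp (((ψ + s) / (2 * n) : ℝ) * I)) ^ n
      = (r : ℂ) ^ n * (exp ((ψ / 2 : ℝ) * I) * exp ((s / 2 : ℝ) * I)) := by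
  have hn' : (n : ℂ) ≠ 0 := Nat.cast_ne_zero.mpr hn
  have hexponent : (n : ℂ) * (((ψ + s) / (2 * n) : ℝ) * I)
      = ((ψ / 2 : ℝ) : ℂ) * I + ((s / 2 : ℝ) : ℂ) * I := by
    push_cast
    field_simp
  rw [mul_pow, ← exp_nat_mul, hexponent, exp_add]

lemma norm_mul_exp_half_arg_mul_I_sq (a : ℂ) :
    (‖a‖ : ℂ) * exp ((arg a / 2 : ℝ) * I) ^ 2 = a := by
  rw [← exp_nat_mul]
  push_cast
  rw [← mul_assoc, mul_div_cancel₀ _ two_ne_zero, norm_mul_exp_arg_mul_I]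

end Complex

lemma mul_add_div_mul_eq_of_sq_eq_neg_one {K : Type*} [Field K] {u E a ρ : K} (hu : u ^ 2 = -1)
    (hE : E ≠ 0) (ha : a = ρ * E ^ 2) (t : K) :
    t * (E * u) + a / (t * (E * u)) = u * E * (t - ρ / t) := by
  have hu_inv : u⁻¹ = -u := by
    rw [inv_eq_of_mul_eq_one_right]
    linear_combination -hu
  subst ha
  simp only [div_eq_mul_inv, mul_inv, hu_inv]
  field_simp
  ring

theorem image_of_rays_general (n : ℕ) (hn : 1 ≤ n) (a c : ℂ) (r : ℝ) :
    ((r : ℂ) * Complex.exp (((Complex.arg a + Real.pi) / (2 * n) : ℝ) * Complex.I)) ^ n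
      + a / ((r : ℂ) * Complex.exp (((Complex.arg a + Real.pi) / (2 * n) : ℝ) * Complex.I)) ^ n + c
    = Complex.I * Complex.exp ((Complex.arg a / 2 : ℝ) * Complex.I) *
        ((r : ℂ) ^ n - (‖a‖ : ℂ) / (r : ℂ) ^ n) + c ∧
    ((r : ℂ) * Complex.exp (((Complex.arg a - Real.pi) / (2 * n) : ℝ) * Complex.I)) ^ n
      + a / ((r : ℂ) * Complex.exp (((Complex.arg a - Real.pi) / (2 * n) : ℝ) * Complex.I)) ^ n + c
    = -Complex.I * Complex.exp ((Complex.arg a / 2 : ℝ) * Complex.I) *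
        ((r : ℂ) ^ n - (‖a‖ : ℂ) / (r : ℂ) ^ n) + c := by
  have hn0 : n ≠ 0 := by omega
  have hE := exp_ne_zero ((arg a / 2 : ℝ) * I)
  have hI : exp ((Real.pi / 2 : ℝ) * I) = I := by
    simpa only [ofReal_div, ofReal_ofNat] using exp_pi_div_two_mul_I
  have hnegI : exp ((-Real.pi / 2 : ℝ) * I) = -I := by
    simpa only [ofReal_div, ofReal_neg, ofReal_ofNat] using exp_neg_pi_div_two_mul_I
  constructor
  · rw [ofReal_mul_exp_div_two_mul_pow n hn0, hI,
      mul_add_div_mul_eq_of_sq_eq_neg_one I_sq hE (norm_mul_exp_half_arg_mul_I_sq a).symm]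
  · rw [sub_eq_add_neg, ofReal_mul_exp_div_two_mul_pow n hn0, hnegI,
      mul_add_div_mul_eq_of_sq_eq_neg_one (by rw [neg_sq, I_sq]) hE
        (norm_mul_exp_half_arg_mul_I_sq a).symm]

/-- For `z = r·exp(i(ψ ± π)/(2n))` with `|a|^{1/n}/2 < r < 2` and `ψ = Arg(a)`, one has
`R(z) = ±i·e^{iψ/2}·(r^n - |a|/r^n) + c`. -/
theorem image_of_rays (n : ℕ) (hn : 1 ≤ n) (a c : ℂ) (ha : a ≠ 0) (r : ℝ)
    (hr1 : (‖a‖) ^ ((1 : ℝ) / n) / 2 < r) (hr2 : r < 2) :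
    ((r : ℂ) * Complex.exp (((Complex.arg a + Real.pi) / (2 * n) : ℝ) * Complex.I)) ^ n
      + a / ((r : ℂ) * Complex.exp (((Complex.arg a + Real.pi) / (2 * n) : ℝ) * Complex.I)) ^ n + c
    = Complex.I * Complex.exp ((Complex.arg a / 2 : ℝ) * Complex.I) *
        ((r : ℂ) ^ n - (‖a‖ : ℂ) / (r : ℂ) ^ n) + c ∧
    ((r : ℂ) * Complex.exp (((Complex.arg a - Real.pi) / (2 * n) : ℝ) * Complex.I)) ^ n
      + a / ((r : ℂ) * Complex.exp (((Complex.arg a - Real.pi) / (2 * n) : ℝ) * Complex.I)) ^ n + c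
    = -Complex.I * Complex.exp ((Complex.arg a / 2 : ℝ) * Complex.I) *
        ((r : ℂ) ^ n - (‖a‖ : ℂ) / (r : ℂ) ^ n) + c :=
  image_of_rays_general n hn a c r
end
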